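/- If (x_1,...,x_k) is a minimizer of the CVT energy E(x_1,...,x_k) = ∑_i ∫_{V_i(x)} ρ(x)‖x - x_i‖² dx over all k-tuples of points, and each Voronoi region has positive mass, then each x_i equals the mass centroid of its own Voronoi region V_i. -/

import Mathlib

/-!
For distinct generators `y` the energy is `∫_W ρ · d(p, {y_j})²`, so it is bounded by the cost
`∑_j ∫_{V_j(x)} ρ ‖p - y_j‖²` of serving the old cells `V_j(x)` by the new points. By the parallel
axis theorem the cost of a cell at `c` is its cost at the mass centroid plus `mass · ‖c - centroid‖²`;
hence moving `x_i` part of the way towards the centroid of `V_i(x)`, to a point not occupied by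
another generator, strictly lowers the energy unless `x_i` is that centroid.

The generators of a minimizer are distinct: a duplicated generator can be sent so far away that its
cell becomes empty while no other cell grows, which removes a positive term from the energy.
-/

open MeasureTheory Metric Set Function
open scoped InnerProductSpace

theorem Function.Injective.update_of_notMem_range {α β : Type*} [DecidableEq α] {f : α → β}
    (hf : Injective f) (a : α) {b : β} (hb : b ∉ range f) : Injective (update f a b) := by
  intro i j hij
  by_contra hne
  rcases eq_or_ne i a with rfl | hi
  · rw [update_self, update_of_ne (Ne.symm hne)] at hij
    exact hb ⟨j, hij.symm⟩
  rcases eq_or_ne j a with rfl | hj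
  · rw [update_self, update_of_ne hi] at hij
    exact hb ⟨i, hij⟩
  · rw [update_of_ne hi, update_of_ne hj] at hij
    exact hne (hf hij)

theorem exists_mem_Ioc_lineMap_notMem {E : Type*} [AddCommGroup E] [Module ℝ E] {a b : E}
    (hab : a ≠ b) {s : Set E} (hs : s.Finite) :
    ∃ t ∈ Ioc (0 : ℝ) 1, AffineMap.lineMap a b t ∉ s :=
  ((Ioc_infinite zero_lt_one).sdiff
    (hs.preimage (AffineMap.lineMap_injective ℝ hab).injOn)).nonempty

theorem Bornology.IsBounded.exists_forall_norm_sub_lt {E : Type*} [NormedAddCommGroup E]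
    [NormedSpace ℝ E] [Nontrivial E] {W : Set E} (hW : IsBounded W) (a : E) :
    ∃ b, ∀ p ∈ W, ‖p - a‖ < ‖p - b‖ := by
  obtain ⟨r, hr, hWr⟩ := hW.subset_ball_lt 0 a
  obtain ⟨v, hv⟩ := exists_norm_eq E (by positivity : 0 ≤ 2 * r)
  refine ⟨a + v, fun p hp => ?_⟩
  have hpa : ‖p - a‖ < r := by simpa [dist_eq_norm] using hWr hp
  have hsub : ‖v‖ - ‖p - a‖ ≤ ‖p - (a + v)‖ := by
    rw [show p - (a + v) = -(v - (p - a)) by abel, norm_neg]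
    exact norm_sub_norm_le v (p - a)
  linarith

section Voronoi

variable {E : Type*} [NormedAddCommGroup E] {ι : Type*} {W : Set E}

def voronoiCell (W : Set E) (c : ι → E) (i : ι) : Set E :=
  {p ∈ W | ∀ j, ‖p - c i‖ ≤ ‖p - c j‖}

theorem isClosed_voronoiCell (hW : IsClosed W) (c : ι → E) (i : ι) :
    IsClosed (voronoiCell W c i) := by
  have hcond : IsClosed {p | ∀ j, ‖p - c i‖ ≤ ‖p - c j‖} := by
    rw [ofPred_forall]
    exact isClosed_iInter fun j => isClosed_le (by fun_prop) (by fun_prop)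
  exact hW.inter hcond

theorem isCompact_voronoiCell (hW : IsCompact W) (c : ι → E) (i : ι) :
    IsCompact (voronoiCell W c i) :=
  hW.of_isClosed_subset (isClosed_voronoiCell hW.isClosed c i) (sep_subset _ _)

theorem iUnion_voronoiCell [Finite ι] [Nonempty ι] (W : Set E) (c : ι → E) :
    ⋃ i, voronoiCell W c i = W :=
  Subset.antisymm (iUnion_subset fun _ => sep_subset _ _) fun p hp =>
    let ⟨i, hi⟩ := Finite.exists_min fun j => ‖p - c j‖
    mem_iUnion.2 ⟨i, hp, hi⟩

theorem infDist_range_eq_of_mem_voronoiCell {c : ι → E} {i : ι} {p : E}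
    (hp : p ∈ voronoiCell W c i) : infDist p (range c) = ‖p - c i‖ := by
  rw [← dist_eq_norm]
  refine le_antisymm (infDist_le_dist_of_mem (mem_range_self i)) ?_
  rw [le_infDist (range_nonempty_iff_nonempty.2 ⟨i⟩)]
  rintro _ ⟨j, rfl⟩
  simpa only [dist_eq_norm] using hp.2 j

theorem voronoiCell_update_subset [DecidableEq ι] {x : ι → E} {j l m : ι} (hjl : j ≠ l)
    (hx : x j = x l) (hm : m ≠ l) (b : E) :
    voronoiCell W (update x l b) m ⊆ voronoiCell W x m := by
  rintro p ⟨hpW, hp⟩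
  refine ⟨hpW, fun n => ?_⟩
  obtain ⟨n', hn'⟩ : ∃ n', update x l b n' = x n := by
    by_cases hn : n = l
    · exact ⟨j, by rw [update_of_ne hjl, hx, hn]⟩
    · exact ⟨n, update_of_ne hn _ _⟩
  simpa only [update_of_ne hm, hn'] using hp n'

end Voronoi

section SecondMoment

variable {E : Type*} [NormedAddCommGroup E] [MeasurableSpace E] [BorelSpace E] {μ : Measure E}
  [IsFiniteMeasureOnCompacts μ] {ρ : E → ℝ} {U V : Set E}

noncomputable def secondMoment (μ : Measure E) (ρ : E → ℝ) (V : Set E) (c : E) : ℝ :=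
  ∫ p in V, ρ p * ‖p - c‖ ^ 2 ∂μ

theorem secondMoment_mono_set (hV : IsCompact V) (hρ : Continuous ρ) (hρ₀ : ∀ p, 0 ≤ ρ p)
    (hUV : U ⊆ V) (c : E) : secondMoment μ ρ U c ≤ secondMoment μ ρ V c :=
  setIntegral_mono_set ((by fun_prop : Continuous _).continuousOn.integrableOn_compact hV)
    (ae_of_all _ fun p => mul_nonneg (hρ₀ p) (sq_nonneg _)) hUV.eventuallyLE

theorem secondMoment_pos [NullSingletonClass μ] (hV : IsCompact V) (hρ : Continuous ρ)
    (hρ₀ : ∀ p, 0 ≤ ρ p) (hm : 0 < ∫ p in V, ρ p ∂μ) (a : E) :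
    0 < secondMoment μ ρ V a := by
  have hsupp := (setIntegral_pos_iff_support_of_nonneg_ae (ae_of_all _ hρ₀)
    (hρ.continuousOn.integrableOn_compact hV)).1 hm
  rw [secondMoment, setIntegral_pos_iff_support_of_nonneg_ae
    (ae_of_all _ fun p => mul_nonneg (hρ₀ p) (sq_nonneg _))
    ((by fun_prop : Continuous _).continuousOn.integrableOn_compact hV)]
  have hsupp_eq : support (fun p => ρ p * ‖p - a‖ ^ 2) ∩ V = (support ρ ∩ V) \ {a} := by
    ext p
    simp only [support_mul, support_pow, mem_inter_iff, mem_support, mem_sdiff, mem_singleton_iff,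
      ne_eq, OfNat.ofNat_ne_zero, not_false_eq_true, norm_eq_zero, sub_eq_zero]
    tauto
  rwa [hsupp_eq, measure_sdiff_null (measure_singleton a)]

variable [InnerProductSpace ℝ E] [CompleteSpace E]

noncomputable def massCentroid (μ : Measure E) (ρ : E → ℝ) (V : Set E) : E :=
  (∫ p in V, ρ p ∂μ)⁻¹ • ∫ p in V, ρ p • p ∂μ

theorem secondMoment_eq_add_mass_mul (hV : IsCompact V) (hρ : Continuous ρ)
    (hm : ∫ p in V, ρ p ∂μ ≠ 0) (c : E) :
    secondMoment μ ρ V c = secondMoment μ ρ V (massCentroid μ ρ V)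
      + (∫ p in V, ρ p ∂μ) * ‖massCentroid μ ρ V - c‖ ^ 2 := by
  set g := massCentroid μ ρ V with hg
  have hρV : IntegrableOn ρ V μ := hρ.continuousOn.integrableOn_compact hV
  have hρpV : IntegrableOn (fun p => ρ p • p) V μ :=
    (by fun_prop : Continuous _).continuousOn.integrableOn_compact hV
  have hbalance : ∫ p in V, ρ p • (p - g) ∂μ = 0 := by
    simp_rw [smul_sub]
    rw [integral_sub hρpV (hρV.smul_const g), integral_smul_const, hg, massCentroid, smul_smul,
      mul_inv_cancel₀ hm, one_smul, sub_self]
  have hexpand : ∀ p, ρ p * ‖p - c‖ ^ 2 =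
      ρ p * ‖p - g‖ ^ 2 + 2 * ⟪g - c, ρ p • (p - g)⟫_ℝ + ρ p * ‖g - c‖ ^ 2 := by
    intro p
    rw [show p - c = (p - g) + (g - c) by abel, norm_add_sq_real, real_inner_smul_right,
      real_inner_comm]
    ring
  simp only [secondMoment, hexpand]
  rw [integral_add _ _, integral_add _ _, integral_const_mul,
    integral_inner (f := fun p => ρ p • (p - g))
      ((by fun_prop : Continuous _).continuousOn.integrableOn_compact hV),
    hbalance, inner_zero_right, integral_mul_const]
  · ring
  all_goals exact (by fun_prop : Continuous _).continuousOn.integrableOn_compact hV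

theorem secondMoment_lt_of_dist_lt (hV : IsCompact V) (hρ : Continuous ρ)
    (hm : 0 < ∫ p in V, ρ p ∂μ) {a c : E}
    (h : dist c (massCentroid μ ρ V) < dist a (massCentroid μ ρ V)) :
    secondMoment μ ρ V c < secondMoment μ ρ V a := by
  rw [secondMoment_eq_add_mass_mul hV hρ hm.ne' c, secondMoment_eq_add_mass_mul hV hρ hm.ne' a,
    ← dist_eq_norm, ← dist_eq_norm, dist_comm _ c, dist_comm _ a]
  gcongr

end SecondMoment

section CVT

variable {E : Type*} [NormedAddCommGroup E] [InnerProductSpace ℝ E] [FiniteDimensional ℝ E]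
  [MeasurableSpace E] [BorelSpace E] {μ : Measure E} [μ.IsAddHaarMeasure] {ι : Type*}
  {ρ : E → ℝ} {W : Set E}

theorem addHaar_perpBisector {a b : E} (hab : a ≠ b) :
    μ (AffineSubspace.perpBisector a b) = 0 :=
  Measure.addHaar_affineSubspace μ _ (by simpa using hab)

theorem pairwise_aedisjoint_voronoiCell (W : Set E) {c : ι → E} (hc : Injective c) :
    Pairwise (AEDisjoint μ on voronoiCell W c) := fun i j hij =>
  measure_mono_null
    (fun p hp => AffineSubspace.mem_perpBisector_iff_dist_eq.2 <| by
      simpa only [dist_eq_norm] using le_antisymm (hp.1.2 j) (hp.2.2 i))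
    (addHaar_perpBisector (hc.ne hij))

theorem sum_setIntegral_voronoiCell [Fintype ι] [Nonempty ι] (hW : IsClosed W) {c : ι → E}
    (hc : Injective c) {F : Type*} [NormedAddCommGroup F] [NormedSpace ℝ F] {f : E → F}
    (hf : IntegrableOn f W μ) :
    ∑ i, ∫ p in voronoiCell W c i, f p ∂μ = ∫ p in W, f p ∂μ := by
  conv_rhs => rw [← iUnion_voronoiCell W c]
  rw [integral_iUnion_ae
    (fun i => (isClosed_voronoiCell hW c i).measurableSet.nullMeasurableSet)
    (pairwise_aedisjoint_voronoiCell W hc) (by rwa [iUnion_voronoiCell]), tsum_fintype]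

noncomputable def cvtEnergy [Fintype ι] (μ : Measure E) (ρ : E → ℝ) (W : Set E) (c : ι → E) :
    ℝ :=
  ∑ i, secondMoment μ ρ (voronoiCell W c i) (c i)

theorem cvtEnergy_eq_setIntegral_infDist_sq [Fintype ι] [Nonempty ι] (hW : IsCompact W)
    (hρ : Continuous ρ) {c : ι → E} (hc : Injective c) :
    cvtEnergy μ ρ W c = ∫ p in W, ρ p * infDist p (range c) ^ 2 ∂μ := by
  rw [← sum_setIntegral_voronoiCell hW.isClosed hc (f := fun p => ρ p * infDist p (range c) ^ 2)
    ((by fun_prop : Continuous _).continuousOn.integrableOn_compact hW)]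
  refine Finset.sum_congr rfl fun i _ => setIntegral_congr_fun
    (isClosed_voronoiCell hW.isClosed c i).measurableSet fun p hp => ?_
  rw [infDist_range_eq_of_mem_voronoiCell hp]

theorem cvtEnergy_le_sum_secondMoment [Fintype ι] [Nonempty ι] (hW : IsCompact W)
    (hρ : Continuous ρ) (hρ₀ : ∀ p, 0 ≤ ρ p) {x y : ι → E} (hx : Injective x)
    (hy : Injective y) :
    cvtEnergy μ ρ W y ≤ ∑ i, secondMoment μ ρ (voronoiCell W x i) (y i) := by
  have hint : ∀ f : E → ℝ, Continuous f → ∀ V, IsCompact V → IntegrableOn f V μ :=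
    fun f hf V hV => hf.continuousOn.integrableOn_compact hV
  rw [cvtEnergy_eq_setIntegral_infDist_sq hW hρ hy, ← sum_setIntegral_voronoiCell hW.isClosed hx
    (hint _ (by fun_prop) W hW)]
  gcongr with i
  refine setIntegral_mono_on (hint _ (by fun_prop) _ (isCompact_voronoiCell hW x i))
    (hint _ (by fun_prop) _ (isCompact_voronoiCell hW x i))
    (isClosed_voronoiCell hW.isClosed x i).measurableSet fun p _ => ?_
  have hdist : infDist p (range y) ≤ ‖p - y i‖ :=
    (infDist_le_dist_of_mem (mem_range_self i)).trans_eq (dist_eq_norm _ _)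
  exact mul_le_mul_of_nonneg_left (pow_le_pow_left₀ infDist_nonneg hdist 2) (hρ₀ p)

theorem injective_of_forall_cvtEnergy_le [Fintype ι] [Nontrivial E] (hW : IsCompact W)
    (hρ : Continuous ρ) (hρ₀ : ∀ p, 0 ≤ ρ p) {x : ι → E}
    (hmin : ∀ y : ι → E, cvtEnergy μ ρ W x ≤ cvtEnergy μ ρ W y)
    (hmass : ∀ i, 0 < ∫ p in voronoiCell W x i, ρ p ∂μ) : Injective x := by
  classical
  intro j l hx
  by_contra hjl
  obtain ⟨b, hb⟩ := hW.isBounded.exists_forall_norm_sub_lt (x j)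
  have hempty : voronoiCell W (update x l b) l = ∅ :=
    eq_empty_of_forall_notMem fun p ⟨hpW, hp⟩ =>
      (hb p hpW).not_ge (by simpa [update_of_ne hjl] using hp j)
  have hl : secondMoment μ ρ (voronoiCell W (update x l b) l) (update x l b l)
      < secondMoment μ ρ (voronoiCell W x l) (x l) := by
    rw [hempty, secondMoment, Measure.restrict_empty, integral_zero_measure]
    exact secondMoment_pos (isCompact_voronoiCell hW x l) hρ hρ₀ (hmass l) (x l)
  refine (hmin (update x l b)).not_gt <|
    Finset.sum_lt_sum (fun m _ => ?_) ⟨l, Finset.mem_univ l, hl⟩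
  rcases eq_or_ne m l with rfl | hm
  · exact hl.le
  · rw [update_of_ne hm]
    exact secondMoment_mono_set (isCompact_voronoiCell hW x m) hρ hρ₀
      (voronoiCell_update_subset hjl hx hm b) (x m)

theorem eq_massCentroid_of_forall_cvtEnergy_le [Fintype ι] [Nontrivial E]
    (hW : IsCompact W) (hρ : Continuous ρ) (hρ₀ : ∀ p, 0 ≤ ρ p) {x : ι → E}
    (hmin : ∀ y : ι → E, cvtEnergy μ ρ W x ≤ cvtEnergy μ ρ W y)
    (hmass : ∀ i, 0 < ∫ p in voronoiCell W x i, ρ p ∂μ) (i : ι) :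
    x i = massCentroid μ ρ (voronoiCell W x i) := by
  classical
  have : Nonempty ι := ⟨i⟩
  have hx := injective_of_forall_cvtEnergy_le hW hρ hρ₀ hmin hmass
  have hV := isCompact_voronoiCell hW x i
  by_contra hne
  obtain ⟨t, ⟨ht₀, ht₁⟩, ht⟩ := exists_mem_Ioc_lineMap_notMem hne (finite_range x)
  set b := AffineMap.lineMap (x i) (massCentroid μ ρ (voronoiCell W x i)) t
  have hcloser : dist b (massCentroid μ ρ (voronoiCell W x i))
      < dist (x i) (massCentroid μ ρ (voronoiCell W x i)) := by
    rw [dist_lineMap_right, Real.norm_of_nonneg (by linarith)]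
    exact mul_lt_of_lt_one_left (dist_pos.2 hne) (by linarith)
  have hi : secondMoment μ ρ (voronoiCell W x i) (update x i b i)
      < secondMoment μ ρ (voronoiCell W x i) (x i) := by
    rw [update_self]
    exact secondMoment_lt_of_dist_lt hV hρ (hmass i) hcloser
  refine (hmin (update x i b)).not_gt <|
    (cvtEnergy_le_sum_secondMoment hW hρ hρ₀ hx (hx.update_of_notMem_range i ht)).trans_lt <|
    Finset.sum_lt_sum (fun j _ => ?_) ⟨i, Finset.mem_univ i, hi⟩
  rcases eq_or_ne j i with rfl | hj
  · exact hi.le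
  · rw [update_of_ne hj]

end CVT

/-- If a `k`-tuple of generators minimizes the CVT energy and each of its Voronoi
regions has positive mass, then every generator is the mass centroid of its own
Voronoi region. -/
theorem cvt_minimizer_is_centroidal
    (k : ℕ)
    (W : Set (EuclideanSpace ℝ (Fin 2))) (hW : IsCompact W)
    (ρ : EuclideanSpace ℝ (Fin 2) → ℝ) (hρcont : Continuous ρ) (hρpos : ∀ x, 0 < ρ x)
    (Vor : (Fin k → EuclideanSpace ℝ (Fin 2)) → Fin k → Set (EuclideanSpace ℝ (Fin 2)))
    (hVor : ∀ c i, Vor c i = {p ∈ W | ∀ j, ‖p - c i‖ ≤ ‖p - c j‖})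
    (E : (Fin k → EuclideanSpace ℝ (Fin 2)) → ℝ)
    (hE : ∀ c, E c = ∑ i, ∫ x in Vor c i, ρ x * ‖x - c i‖ ^ 2 ∂volume)
    (x : Fin k → EuclideanSpace ℝ (Fin 2))
    (hmin : ∀ y : Fin k → EuclideanSpace ℝ (Fin 2), E x ≤ E y)
    (hmass : ∀ i, 0 < ∫ p in Vor x i, ρ p ∂volume) :
    ∀ i, x i = (∫ p in Vor x i, ρ p ∂volume)⁻¹ • (∫ p in Vor x i, ρ p • p ∂volume) := by
  obtain rfl : Vor = voronoiCell W := funext₂ hVor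
  obtain rfl : E = cvtEnergy volume ρ W := funext hE
  exact eq_massCentroid_of_forall_cvtEnergy_le hW hρcont (fun p => (hρpos p).le) hmin hmass
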